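/- arXiv:2302.02893 — 2 statements merged into one kernel-verified Lean document; each statement's English description precedes it below -/
import Mathlib

section
/- Let V be a real normed space and let Q, M be real Hilbert spaces. Let b_u : V × M → ℝ be a bounded bilinear form such that the induced bounded linear map V → M* (sending v to the functional b_u(v,·)) is surjective; equivalently, for every μ ∈ M there exists u ∈ V with b_u(u,λ) = ⟪μ,λ⟫_M for all λ ∈ M. Let K : M → Q be a compact linear operator and set b_p(q,λ) := ⟪q, Kλ⟫_Q. Let (V_n)_{n∈ℕ}, (Q_n)_{n∈ℕ}, (M_n)_{n∈ℕ} be sequences of subspaces of V, Q, M respectively such that each M_n is finite-dimensional, the family (V_n) has the approximation property (for every v ∈ V there exist v_n ∈ V_n with ‖v_n − v‖ → 0), and for every n and every nonzero λ ∈ M_n there exists u ∈ V_n with b_u(u,λ) ≠ 0. Then the following are equivalent: (i) there exists β > 0 such that for all n and all nonzero λ ∈ M_n one has sup over nonzero pairs (u,p) ∈ V_n × Q_n of (b_u(u,λ) − b_p(p,λ)) / (‖u‖_V² + ‖p‖_Q²)^{1/2} ≥ β ‖λ‖_M; (ii) there exists β̂ > 0 such that for all n and all nonzero λ ∈ M_n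 one has sup over nonzero u ∈ V_n of b_u(u,λ)/‖u‖_V ≥ β̂ ‖λ‖_M. -/
open scoped InnerProductSpace
open Filter

set_option maxHeartbeats 1600000 in
/-- Theorem 3.1 (Equivalence of inf–sup stable discretizations), abstract form:
with `bu` a bounded bilinear form whose induced map `V → M*` is surjective,
`bp q lam = ⟪q, K lam⟫` with `K` compact, the discrete inf–sup condition (2.5)
holds uniformly iff the reduced condition (2.6) holds uniformly. -/
theorem infSup_equivalence
    {V Q M : Type*}
    [NormedAddCommGroup V] [NormedSpace ℝ V]
    [NormedAddCommGroup Q] [InnerProductSpace ℝ Q] [CompleteSpace Q]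
    [NormedAddCommGroup M] [InnerProductSpace ℝ M] [CompleteSpace M]
    (bu : V →L[ℝ] M →L[ℝ] ℝ)
    (hsurj : ∀ μ : M, ∃ u : V, ∀ lam : M, bu u lam = ⟪μ, lam⟫_ℝ)
    (K : M →L[ℝ] Q) (hK : IsCompactOperator (⇑K))
    (bp : Q → M → ℝ)
    (hbp : ∀ (q : Q) (lam : M), bp q lam = ⟪q, K lam⟫_ℝ)
    (Vn : ℕ → Submodule ℝ V) (Qn : ℕ → Submodule ℝ Q) (Mn : ℕ → Submodule ℝ M)
    (hMfin : ∀ n, FiniteDimensional ℝ (Mn n))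
    (happrox : ∀ v : V, ∃ w : ℕ → V, (∀ n, w n ∈ Vn n) ∧
      Tendsto (fun n => ‖w n - v‖) atTop (nhds 0))
    (hnondeg : ∀ n, ∀ lam ∈ Mn n, lam ≠ 0 → ∃ u ∈ Vn n, bu u lam ≠ 0) :
    (∃ β > (0 : ℝ), ∀ n, ∀ lam ∈ Mn n, lam ≠ 0 →
      β * ‖lam‖ ≤ sSup {r : ℝ | ∃ u ∈ Vn n, ∃ p ∈ Qn n, ¬(u = 0 ∧ p = 0) ∧
        r = (bu u lam - bp p lam) / Real.sqrt (‖u‖ ^ 2 + ‖p‖ ^ 2)})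
    ↔
    (∃ βhat > (0 : ℝ), ∀ n, ∀ lam ∈ Mn n, lam ≠ 0 →
      βhat * ‖lam‖ ≤ sSup {r : ℝ | ∃ u ∈ Vn n, u ≠ 0 ∧ r = bu u lam / ‖u‖}) := by
  classical
  -- boundedness of the reduced set
  have hS2bdd : ∀ (n : ℕ) (lam : M),
      BddAbove {r : ℝ | ∃ u ∈ Vn n, u ≠ 0 ∧ r = bu u lam / ‖u‖} := by
    intro n lam
    refine ⟨‖bu‖ * ‖lam‖, ?_⟩
    rintro r ⟨u, hu, hu0, rfl⟩
    rw [div_le_iff₀ (norm_pos_iff.mpr hu0)]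
    calc bu u lam ≤ ‖bu u lam‖ := Real.le_norm_self _
      _ ≤ ‖bu‖ * ‖u‖ * ‖lam‖ := bu.le_opNorm₂ u lam
      _ = ‖bu‖ * ‖lam‖ * ‖u‖ := by ring
  -- nonemptiness of the reduced set
  have hS2ne : ∀ n, ∀ lam ∈ Mn n, lam ≠ 0 →
      ({r : ℝ | ∃ u ∈ Vn n, u ≠ 0 ∧ r = bu u lam / ‖u‖}).Nonempty := by
    intro n lam hmem h0
    obtain ⟨u, hu, hbu⟩ := hnondeg n lam hmem h0
    have hu0 : u ≠ 0 := by rintro rfl; simp at hbu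
    exact ⟨bu u lam / ‖u‖, u, hu, hu0, rfl⟩
  -- key upper-bound transfer: sSup S2 ≤ c  ⇒  bu u lam ≤ c‖u‖ for u in Vn n
  have hkey : ∀ n, ∀ lam : M, ∀ c : ℝ,
      sSup {r : ℝ | ∃ u ∈ Vn n, u ≠ 0 ∧ r = bu u lam / ‖u‖} ≤ c →
      ∀ u ∈ Vn n, bu u lam ≤ c * ‖u‖ := by
    intro n lam c hc u hu
    rcases eq_or_ne u 0 with rfl | hu0
    · simp
    · have h1 : bu u lam / ‖u‖ ≤ sSup _ :=
        le_csSup (hS2bdd n lam) (show bu u lam / ‖u‖ ∈ _ from ⟨u, hu, hu0, rfl⟩)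
      have h2 := h1.trans hc
      rwa [div_le_iff₀ (norm_pos_iff.mpr hu0)] at h2
  -- pointwise upper bound on elements of the full set
  have hS1elem : ∀ (n : ℕ) (lam : M) (c : ℝ), 0 ≤ c →
      (∀ u ∈ Vn n, bu u lam ≤ c * ‖u‖) →
      ∀ r ∈ {r : ℝ | ∃ u ∈ Vn n, ∃ p ∈ Qn n, ¬(u = 0 ∧ p = 0) ∧
        r = (bu u lam - bp p lam) / Real.sqrt (‖u‖ ^ 2 + ‖p‖ ^ 2)},
      r ≤ Real.sqrt (c ^ 2 + ‖K lam‖ ^ 2) := by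
    rintro n lam c hc hb r ⟨u, hu, p, hp, hne, rfl⟩
    have hden : 0 < Real.sqrt (‖u‖ ^ 2 + ‖p‖ ^ 2) := by
      apply Real.sqrt_pos.mpr
      rcases not_and_or.mp hne with h | h
      · have h' : 0 < ‖u‖ := norm_pos_iff.mpr h
        nlinarith [sq_nonneg ‖p‖]
      · have h' : 0 < ‖p‖ := norm_pos_iff.mpr h
        nlinarith [sq_nonneg ‖u‖]
    rw [div_le_iff₀ hden]
    have h1 : bu u lam ≤ c * ‖u‖ := hb u hu
    have h2 : -(bp p lam) ≤ ‖K lam‖ * ‖p‖ := by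
      rw [hbp]
      have h3 := abs_real_inner_le_norm p (K lam)
      have h4 := neg_abs_le (⟪p, K lam⟫_ℝ)
      nlinarith
    have hcs : c * ‖u‖ + ‖K lam‖ * ‖p‖ ≤
        Real.sqrt (c ^ 2 + ‖K lam‖ ^ 2) * Real.sqrt (‖u‖ ^ 2 + ‖p‖ ^ 2) := by
      have hL : 0 ≤ c * ‖u‖ + ‖K lam‖ * ‖p‖ := by positivity
      have hsq : (c * ‖u‖ + ‖K lam‖ * ‖p‖) ^ 2 ≤
          (c ^ 2 + ‖K lam‖ ^ 2) * (‖u‖ ^ 2 + ‖p‖ ^ 2) := by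
        nlinarith [sq_nonneg (c * ‖p‖ - ‖K lam‖ * ‖u‖)]
      calc c * ‖u‖ + ‖K lam‖ * ‖p‖
          = Real.sqrt ((c * ‖u‖ + ‖K lam‖ * ‖p‖) ^ 2) := (Real.sqrt_sq hL).symm
        _ ≤ Real.sqrt ((c ^ 2 + ‖K lam‖ ^ 2) * (‖u‖ ^ 2 + ‖p‖ ^ 2)) := Real.sqrt_le_sqrt hsq
        _ = _ := Real.sqrt_mul (by positivity) _
    linarith
  -- nonemptiness of the full set
  have hS1ne : ∀ n, ∀ lam ∈ Mn n, lam ≠ 0 →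
      ({r : ℝ | ∃ u ∈ Vn n, ∃ p ∈ Qn n, ¬(u = 0 ∧ p = 0) ∧
        r = (bu u lam - bp p lam) / Real.sqrt (‖u‖ ^ 2 + ‖p‖ ^ 2)}).Nonempty := by
    intro n lam hmem h0
    obtain ⟨u, hu, hbu⟩ := hnondeg n lam hmem h0
    have hu0 : u ≠ 0 := by rintro rfl; simp at hbu
    exact ⟨_, u, hu, 0, (Qn n).zero_mem, fun h => hu0 h.1, rfl⟩
  constructor
  · -- hard direction: (i) ⇒ (ii)
    rintro ⟨β, hβ, hi⟩
    by_contra hii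
    push_neg at hii
    choose nf lamf hmemf h0f hltf using
      fun k : ℕ => hii (1 / ((k : ℝ) + 1)) (by positivity)
    -- normalize
    set μ : ℕ → M := fun k => ‖lamf k‖⁻¹ • lamf k with hμdef
    have hμmem : ∀ k, μ k ∈ Mn (nf k) := fun k => Submodule.smul_mem _ _ (hmemf k)
    have hμnorm : ∀ k, ‖μ k‖ = 1 := by
      intro k
      have h0 : ‖lamf k‖ ≠ 0 := norm_ne_zero_iff.mpr (h0f k)
      rw [hμdef]
      simp only [norm_smul, norm_inv, norm_norm]
      field_simp
    have hμ0 : ∀ k, μ k ≠ 0 := by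
      intro k h
      have := hμnorm k
      rw [h, norm_zero] at this
      norm_num at this
    -- reduced bound for the normalized sequence
    have h1 : ∀ k, ∀ u ∈ Vn (nf k), bu u (μ k) ≤ (1 / ((k : ℝ) + 1)) * ‖u‖ := by
      intro k u hu
      have hb : bu u (lamf k) ≤ (1 / ((k : ℝ) + 1) * ‖lamf k‖) * ‖u‖ :=
        hkey (nf k) (lamf k) _ (le_of_lt (hltf k)) u hu
      have heq : bu u (μ k) = ‖lamf k‖⁻¹ * bu u (lamf k) := by
        rw [hμdef]; simp [map_smul]
      have hpos : (0 : ℝ) < ‖lamf k‖ := norm_pos_iff.mpr (h0f k)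
      rw [heq]
      calc ‖lamf k‖⁻¹ * bu u (lamf k)
          ≤ ‖lamf k‖⁻¹ * ((1 / ((k : ℝ) + 1) * ‖lamf k‖) * ‖u‖) := by
            exact mul_le_mul_of_nonneg_left hb (by positivity)
        _ = (1 / ((k : ℝ) + 1)) * ‖u‖ := by field_simp
    have h1abs : ∀ k, ∀ u ∈ Vn (nf k), |bu u (μ k)| ≤ (1 / ((k : ℝ) + 1)) * ‖u‖ := by
      intro k u hu
      refine abs_le.mpr ⟨?_, h1 k u hu⟩
      have hneg := h1 k (-u) ((Vn (nf k)).neg_mem hu)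
      simp only [map_neg, ContinuousLinearMap.neg_apply, norm_neg] at hneg
      linarith
    -- the quantitative lower bound on ‖K (μ k)‖
    have h2 : ∀ k : ℕ, β ^ 2 ≤ (1 / ((k : ℝ) + 1)) ^ 2 + ‖K (μ k)‖ ^ 2 := by
      intro k
      have hup := csSup_le (hS1ne (nf k) (μ k) (hμmem k) (hμ0 k))
        (fun r hr => hS1elem (nf k) (μ k) _ (by positivity) (h1 k) r hr)
      have hlow := hi (nf k) (μ k) (hμmem k) (hμ0 k)
      have hle : β * ‖μ k‖ ≤ Real.sqrt ((1 / ((k : ℝ) + 1)) ^ 2 + ‖K (μ k)‖ ^ 2) :=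
        hlow.trans hup
      rw [hμnorm k, mul_one] at hle
      have hx : (0 : ℝ) ≤ (1 / ((k : ℝ) + 1)) ^ 2 + ‖K (μ k)‖ ^ 2 := by positivity
      nlinarith [Real.sq_sqrt hx, Real.sqrt_nonneg ((1 / ((k : ℝ) + 1)) ^ 2 + ‖K (μ k)‖ ^ 2)]
    by_cases hbdd : ∃ N, ∀ k, nf k ≤ N
    · -- Case A: the levels stay bounded; use finite-dimensionality of Mn m
      obtain ⟨N, hN⟩ := hbdd
      obtain ⟨m, hm⟩ := Finite.exists_infinite_fiber
        (fun k : ℕ => (⟨nf k, Nat.lt_succ_of_le (hN k)⟩ : Fin (N + 1)))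
      rw [Set.infinite_coe_iff] at hm
      have hfreq : ∃ᶠ k in atTop, nf k = (m : ℕ) := by
        rw [Nat.frequently_atTop_iff_infinite]
        refine hm.mono ?_
        intro k hk
        simpa using congrArg Fin.val hk
      obtain ⟨φ, hφmono, hφ⟩ := Filter.extraction_of_frequently_atTop hfreq
      haveI := hMfin (m : ℕ)
      set x : ℕ → Mn (m : ℕ) := fun j => ⟨μ (φ j), by rw [← hφ j]; exact hμmem (φ j)⟩ with hxdef
      have hx : ∀ j, x j ∈ Metric.sphere (0 : Mn (m : ℕ)) 1 := by
        intro j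
        rw [mem_sphere_zero_iff_norm]
        have : ‖x j‖ = ‖μ (φ j)‖ := rfl
        rw [this, hμnorm]
      obtain ⟨a, ha, σ, hσmono, hσ⟩ := (isCompact_sphere (0 : Mn (m : ℕ)) 1).tendsto_subseq hx
      have haM : (a : M) ∈ Mn (m : ℕ) := a.2
      have ha0 : (a : M) ≠ 0 := by
        rw [mem_sphere_zero_iff_norm] at ha
        intro h
        have : ‖(a : M)‖ = 1 := ha
        rw [h, norm_zero] at this
        norm_num at this
      obtain ⟨u, hu, hbu⟩ := hnondeg (m : ℕ) (a : M) haM ha0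
      apply hbu
      have hconv : Tendsto (fun j => μ (φ (σ j))) atTop (nhds (a : M)) := by
        have : Tendsto (fun j => ((x ∘ σ) j : M)) atTop (nhds (a : M)) :=
          ((continuous_subtype_val.tendsto a).comp hσ)
        exact this
      have hlim : Tendsto (fun j => bu u (μ (φ (σ j)))) atTop (nhds (bu u (a : M))) :=
        ((bu u).continuous.tendsto _).comp hconv
      have hzero : Tendsto (fun j => bu u (μ (φ (σ j)))) atTop (nhds 0) := by
        have hbound : ∀ j : ℕ, ‖bu u (μ (φ (σ j)))‖ ≤ (1 / ((j : ℝ) + 1)) * ‖u‖ := by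
          intro j
          have hu' : u ∈ Vn (nf (φ (σ j))) := by rw [hφ (σ j)]; exact hu
          have hb := h1abs (φ (σ j)) u hu'
          rw [Real.norm_eq_abs]
          refine hb.trans ?_
          have hj : (j : ℝ) + 1 ≤ (φ (σ j) : ℝ) + 1 := by
            have h1' : j ≤ σ j := hσmono.le_apply
            have h2' : σ j ≤ φ (σ j) := hφmono.le_apply
            have : j ≤ φ (σ j) := h1'.trans h2'
            exact_mod_cast Nat.succ_le_succ this
          have := one_div_le_one_div_of_le (by positivity) hj
          exact mul_le_mul_of_nonneg_right this (norm_nonneg u)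
        have htend : Tendsto (fun j : ℕ => (1 / ((j : ℝ) + 1)) * ‖u‖) atTop (nhds 0) := by
          simpa using tendsto_one_div_add_atTop_nhds_zero_nat.mul
            (tendsto_const_nhds (x := ‖u‖))
        exact squeeze_zero_norm hbound htend
      exact tendsto_nhds_unique hlim hzero
    · -- Case B: the levels are unbounded; use compactness of K
      push_neg at hbdd
      have hfreq : ∀ N : ℕ, ∃ᶠ k in atTop, N < nf k := by
        intro N
        rw [Filter.frequently_atTop]
        intro a
        obtain ⟨k, hk⟩ := hbdd (max N ((Finset.range a).sup nf))
        refine ⟨k, ?_, lt_of_le_of_lt (le_max_left _ _) hk⟩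
        by_contra hka
        push_neg at hka
        have h1' : nf k ≤ (Finset.range a).sup nf :=
          Finset.le_sup (Finset.mem_range.mpr hka)
        have h2' := h1'.trans (le_max_right N _)
        omega
      obtain ⟨φ, hφmono, hφ⟩ := Filter.extraction_forall_of_frequently hfreq
      have hnf_tendsto : Tendsto (fun j => nf (φ j)) atTop atTop :=
        tendsto_atTop_mono (fun j => (hφ j).le) tendsto_id
      -- weak convergence to zero
      have hweak : ∀ m0 : M, Tendsto (fun j => ⟪m0, μ (φ j)⟫_ℝ) atTop (nhds 0) := by
        intro m0
        obtain ⟨u, hu⟩ := hsurj m0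
        obtain ⟨w, hwmem, hwt⟩ := happrox u
        have hwt' : Tendsto (fun j => ‖w (nf (φ j)) - u‖) atTop (nhds 0) :=
          hwt.comp hnf_tendsto
        have hbound : ∀ j : ℕ, ‖⟪m0, μ (φ j)⟫_ℝ‖ ≤
            (1 / ((j : ℝ) + 1)) * (‖w (nf (φ j)) - u‖ + ‖u‖)
            + ‖bu‖ * ‖w (nf (φ j)) - u‖ := by
          intro j
          have heq : ⟪m0, μ (φ j)⟫_ℝ = bu u (μ (φ j)) := (hu _).symm
          rw [Real.norm_eq_abs, heq]
          set v := w (nf (φ j)) with hvdef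
          have hsplit : bu u (μ (φ j)) = bu v (μ (φ j)) + bu (u - v) (μ (φ j)) := by
            have : v + (u - v) = u := by abel
            rw [← this]
            simp [map_add]
          rw [hsplit]
          have ha1 : |bu v (μ (φ j))| ≤ (1 / ((φ j : ℝ) + 1)) * ‖v‖ :=
            h1abs (φ j) v (hwmem _)
          have hb1 : |bu (u - v) (μ (φ j))| ≤ ‖bu‖ * ‖u - v‖ := by
            calc |bu (u - v) (μ (φ j))| = ‖bu (u - v) (μ (φ j))‖ := (Real.norm_eq_abs _).symm
              _ ≤ ‖bu‖ * ‖u - v‖ * ‖μ (φ j)‖ := bu.le_opNorm₂ _ _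
              _ = ‖bu‖ * ‖u - v‖ := by rw [hμnorm, mul_one]
          have hj : (j : ℝ) + 1 ≤ (φ j : ℝ) + 1 := by
            have := hφmono.le_apply (x := j)
            exact_mod_cast Nat.succ_le_succ this
          have hmono : (1 / ((φ j : ℝ) + 1)) ≤ 1 / ((j : ℝ) + 1) :=
            one_div_le_one_div_of_le (by positivity) hj
          have hv : ‖v‖ ≤ ‖v - u‖ + ‖u‖ := by
            calc ‖v‖ = ‖(v - u) + u‖ := by rw [sub_add_cancel]
              _ ≤ ‖v - u‖ + ‖u‖ := norm_add_le _ _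
          have huv : ‖u - v‖ = ‖v - u‖ := norm_sub_rev _ _
          calc |bu v (μ (φ j)) + bu (u - v) (μ (φ j))|
              ≤ |bu v (μ (φ j))| + |bu (u - v) (μ (φ j))| := abs_add_le _ _
            _ ≤ (1 / ((j : ℝ) + 1)) * (‖v - u‖ + ‖u‖) + ‖bu‖ * ‖v - u‖ := by
                refine add_le_add ?_ (by rw [← huv]; exact hb1)
                refine ha1.trans ?_
                have h1' : (1 / ((φ j : ℝ) + 1)) * ‖v‖ ≤ (1 / ((j : ℝ) + 1)) * ‖v‖ :=
                  mul_le_mul_of_nonneg_right hmono (norm_nonneg _)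
                refine h1'.trans ?_
                exact mul_le_mul_of_nonneg_left hv (by positivity)
        have htend : Tendsto (fun j : ℕ => (1 / ((j : ℝ) + 1)) * (‖w (nf (φ j)) - u‖ + ‖u‖)
            + ‖bu‖ * ‖w (nf (φ j)) - u‖) atTop (nhds 0) := by
          have l1 : Tendsto (fun j : ℕ => (1 / ((j : ℝ) + 1))) atTop (nhds 0) :=
            tendsto_one_div_add_atTop_nhds_zero_nat
          have := (l1.mul (hwt'.add (tendsto_const_nhds (x := ‖u‖)))).add
            ((tendsto_const_nhds (x := ‖bu‖)).mul hwt')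
          simpa using this
        exact squeeze_zero_norm hbound htend
      -- compactness extraction
      obtain ⟨S, hScomp, hSmem⟩ := hK
      obtain ⟨ε, hε, hball⟩ := Metric.mem_nhds_iff.mp hSmem
      set c : ℝ := ε / 2 with hcdef
      have hcpos : 0 < c := by positivity
      set y : ℕ → Q := fun j => K (c • μ (φ j)) with hydef
      have hyS : ∀ j, y j ∈ S := by
        intro j
        apply hball
        rw [mem_ball_zero_iff, norm_smul, hμnorm, mul_one, Real.norm_eq_abs,
          abs_of_pos hcpos]
        rw [hcdef]; linarith
      obtain ⟨a, haS, σ, hσmono, hσ⟩ := hScomp.tendsto_subseq hyS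
      have ha0 : a = 0 := by
        have hinner : ∀ q' : Q, ⟪q', a⟫_ℝ = 0 := by
          intro q'
          have hl1 : Tendsto (fun j => ⟪q', (y ∘ σ) j⟫_ℝ) atTop (nhds ⟪q', a⟫_ℝ) :=
            Tendsto.inner tendsto_const_nhds hσ
          have hl2 : Tendsto (fun j => ⟪q', (y ∘ σ) j⟫_ℝ) atTop (nhds 0) := by
            have heq : ∀ j, ⟪q', (y ∘ σ) j⟫_ℝ =
                c * ⟪(ContinuousLinearMap.adjoint K) q', μ (φ (σ j))⟫_ℝ := by
              intro j
              show ⟪q', K (c • μ (φ (σ j)))⟫_ℝ = _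
              rw [← ContinuousLinearMap.adjoint_inner_left, real_inner_smul_right]
            simp only [heq]
            have := (hweak ((ContinuousLinearMap.adjoint K) q')).comp hσmono.tendsto_atTop
            simpa using (tendsto_const_nhds (x := c)).mul this
          exact tendsto_nhds_unique hl1 hl2
        exact inner_self_eq_zero.mp (hinner a)
      -- the contradiction
      have hKnorm : ∀ j, ‖K (μ (φ j))‖ = c⁻¹ * ‖y j‖ := by
        intro j
        rw [hydef]
        simp only [map_smul, norm_smul, Real.norm_eq_abs, abs_of_pos hcpos]
        field_simp
      have hy0 : Tendsto (fun j => ‖y (σ j)‖) atTop (nhds 0) := by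
        rw [ha0] at hσ
        have := hσ.norm
        simpa using this
      have hKlim : Tendsto (fun j => ‖K (μ (φ (σ j)))‖ ^ 2) atTop (nhds 0) := by
        have h' : Tendsto (fun j => c⁻¹ * ‖y (σ j)‖) atTop (nhds 0) := by
          simpa using (tendsto_const_nhds (x := c⁻¹)).mul hy0
        have h'' : Tendsto (fun j => ‖K (μ (φ (σ j)))‖) atTop (nhds 0) := by
          simpa only [hKnorm] using h'
        simpa using h''.pow 2
      have hfin : Tendsto (fun j : ℕ => (1 / ((j : ℝ) + 1)) ^ 2 + ‖K (μ (φ (σ j)))‖ ^ 2)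
          atTop (nhds 0) := by
        simpa using (tendsto_one_div_add_atTop_nhds_zero_nat.pow 2).add hKlim
      have hle : β ^ 2 ≤ 0 := by
        refine le_of_tendsto_of_tendsto' tendsto_const_nhds hfin ?_
        intro j
        refine (h2 (φ (σ j))).trans (add_le_add ?_ le_rfl)
        have hj : (j : ℝ) + 1 ≤ (φ (σ j) : ℝ) + 1 := by
          have h1' : j ≤ σ j := hσmono.le_apply
          have h2' : σ j ≤ φ (σ j) := hφmono.le_apply
          have : j ≤ φ (σ j) := h1'.trans h2'
          exact_mod_cast Nat.succ_le_succ this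
        have hmono : (1 / ((φ (σ j) : ℝ) + 1)) ≤ 1 / ((j : ℝ) + 1) :=
          one_div_le_one_div_of_le (by positivity) hj
        have h0' : (0 : ℝ) ≤ 1 / ((φ (σ j) : ℝ) + 1) := by positivity
        exact pow_le_pow_left₀ h0' hmono 2
      have hpos : (0 : ℝ) < β ^ 2 := by positivity
      linarith
  · -- easy direction: (ii) ⇒ (i)
    rintro ⟨βh, hβh, hii⟩
    refine ⟨βh, hβh, fun n lam hmem h0 => ?_⟩
    refine (hii n lam hmem h0).trans (csSup_le_csSup ?_ (hS2ne n lam hmem h0) ?_)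
    · refine ⟨Real.sqrt ((‖bu‖ * ‖lam‖) ^ 2 + ‖K lam‖ ^ 2),
        fun r hr => hS1elem n lam _ (by positivity) ?_ r hr⟩
      intro u hu
      calc bu u lam ≤ ‖bu u lam‖ := Real.le_norm_self _
        _ ≤ ‖bu‖ * ‖u‖ * ‖lam‖ := bu.le_opNorm₂ u lam
        _ = ‖bu‖ * ‖lam‖ * ‖u‖ := by ring
    · rintro r ⟨u, hu, hu0, rfl⟩
      refine ⟨u, hu, 0, (Qn n).zero_mem, fun h => hu0 h.1, ?_⟩
      rw [hbp]
      simp [inner_zero_left, Real.sqrt_sq (norm_nonneg u)]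
end

section
/- Let V be a real normed space and M a real Hilbert space. Let b_u : V × M → ℝ be a bounded bilinear form such that for every μ ∈ M there exists u ∈ V with b_u(u,λ) = ⟪μ,λ⟫_M for all λ ∈ M (i.e. the induced map V → M* is surjective). Let (V_n)_{n∈ℕ} be a sequence of subspaces of V with the approximation property (for every v ∈ V there exist v_n ∈ V_n with ‖v_n − v‖ → 0). Suppose (λ_n)_{n∈ℕ} is a sequence in M converging weakly to some λ* ∈ M, and suppose a_n := sup over nonzero u ∈ V_n of b_u(u,λ_n)/‖u‖_V tends to 0 as n → ∞ (with a_n := 0 if V_n = {0}). Then λ* = 0. -/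
open scoped InnerProductSpace
open Filter

/-- Key intermediate claim in the proof of Theorem 3.1: if the single-variable
inf–sup expressions `a n` for a weakly convergent sequence of multipliers tend
to zero, the weak limit vanishes. (Note `sSup ∅ = 0` in `ℝ`, matching the
convention `a n = 0` when `Vn n = {0}`.) -/
theorem weak_limit_vanishes
    {V M : Type*}
    [NormedAddCommGroup V] [NormedSpace ℝ V]
    [NormedAddCommGroup M] [InnerProductSpace ℝ M] [CompleteSpace M]
    (bu : V →L[ℝ] M →L[ℝ] ℝ)
    (hsurj : ∀ μ : M, ∃ u : V, ∀ lam : M, bu u lam = ⟪μ, lam⟫_ℝ)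
    (Vn : ℕ → Submodule ℝ V)
    (happrox : ∀ v : V, ∃ w : ℕ → V, (∀ n, w n ∈ Vn n) ∧
      Tendsto (fun n => ‖w n - v‖) atTop (nhds 0))
    (lam : ℕ → M) (lamStar : M)
    (hweak : ∀ μ : M, Tendsto (fun n => ⟪μ, lam n⟫_ℝ) atTop (nhds ⟪μ, lamStar⟫_ℝ))
    (a : ℕ → ℝ)
    (ha : ∀ n, a n = sSup {r : ℝ | ∃ u ∈ Vn n, u ≠ 0 ∧ r = bu u (lam n) / ‖u‖})
    (ha0 : Tendsto a atTop (nhds 0)) :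
    lamStar = 0 := by
  -- uniform bound on ‖lam n‖ by Banach–Steinhaus
  obtain ⟨C, hC⟩ : ∃ C, ∀ n, ‖lam n‖ ≤ C := by
    have hbs : ∃ C', ∀ n, ‖innerSL ℝ (lam n)‖ ≤ C' := by
      apply banach_steinhaus
      intro μ
      have h1 : Tendsto (fun n => ‖⟪μ, lam n⟫_ℝ‖) atTop (nhds ‖⟪μ, lamStar⟫_ℝ‖) :=
        (hweak μ).norm
      obtain ⟨C, hC⟩ := h1.bddAbove_range
      refine ⟨C, fun n => ?_⟩
      have : ‖⟪μ, lam n⟫_ℝ‖ ≤ C := hC ⟨n, rfl⟩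
      simpa [real_inner_comm] using this
    obtain ⟨C', hC'⟩ := hbs
    exact ⟨C', fun n => by simpa [innerSL_apply_norm] using hC' n⟩
  have hCnn : 0 ≤ C := le_trans (norm_nonneg _) (hC 0)
  obtain ⟨u, hu⟩ := hsurj lamStar
  obtain ⟨w, hw, hwconv⟩ := happrox u
  -- key inequality
  have key : ∀ n, ⟪lamStar, lam n⟫_ℝ ≤ a n * ‖w n‖ + ‖bu‖ * C * ‖w n - u‖ := by
    intro n
    have h1 : (bu (w n)) (lam n) ≤ a n * ‖w n‖ := by
      by_cases hwn : w n = 0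
      · simp [hwn]
      · have hpos : (0:ℝ) < ‖w n‖ := norm_pos_iff.mpr hwn
        have hbdd : BddAbove {r : ℝ | ∃ u ∈ Vn n, u ≠ 0 ∧ r = bu u (lam n) / ‖u‖} := by
          refine ⟨‖bu‖ * ‖lam n‖, ?_⟩
          rintro r ⟨v, hv, hv0, rfl⟩
          have hvpos : (0:ℝ) < ‖v‖ := norm_pos_iff.mpr hv0
          rw [div_le_iff₀ hvpos]
          calc (bu v) (lam n) ≤ ‖(bu v) (lam n)‖ := le_abs_self _
            _ ≤ ‖bu v‖ * ‖lam n‖ := (bu v).le_opNorm _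
            _ ≤ (‖bu‖ * ‖v‖) * ‖lam n‖ :=
                mul_le_mul_of_nonneg_right (bu.le_opNorm v) (norm_nonneg _)
            _ = ‖bu‖ * ‖lam n‖ * ‖v‖ := by ring
        have hmem : (bu (w n)) (lam n) / ‖w n‖ ∈
            {r : ℝ | ∃ u ∈ Vn n, u ≠ 0 ∧ r = bu u (lam n) / ‖u‖} :=
          ⟨w n, hw n, hwn, rfl⟩
        have := le_csSup hbdd hmem
        rw [← ha n] at this
        exact (div_le_iff₀ hpos).mp this
    have h2 : (bu (u - w n)) (lam n) ≤ ‖bu‖ * C * ‖w n - u‖ := by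
      calc (bu (u - w n)) (lam n) ≤ ‖(bu (u - w n)) (lam n)‖ := le_abs_self _
        _ ≤ ‖bu (u - w n)‖ * ‖lam n‖ := (bu _).le_opNorm _
        _ ≤ (‖bu‖ * ‖u - w n‖) * ‖lam n‖ :=
            mul_le_mul_of_nonneg_right (bu.le_opNorm _) (norm_nonneg _)
        _ ≤ (‖bu‖ * ‖u - w n‖) * C :=
            mul_le_mul_of_nonneg_left (hC n) (by positivity)
        _ = ‖bu‖ * C * ‖u - w n‖ := by ring
        _ = ‖bu‖ * C * ‖w n - u‖ := by rw [norm_sub_rev]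
    have heq : ⟪lamStar, lam n⟫_ℝ = (bu (w n)) (lam n) + (bu (u - w n)) (lam n) := by
      rw [← hu (lam n)]
      have : (bu (w n)) (lam n) + (bu (u - w n)) (lam n)
          = (bu (w n + (u - w n))) (lam n) := by
        rw [map_add]; simp
      rw [this, add_sub_cancel]
    rw [heq]
    exact add_le_add h1 h2
  -- the RHS tends to 0
  have hwlim : Tendsto w atTop (nhds u) := by
    rw [tendsto_iff_norm_sub_tendsto_zero]; exact hwconv
  have hrhs : Tendsto (fun n => a n * ‖w n‖ + ‖bu‖ * C * ‖w n - u‖) atTop (nhds 0) := by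
    have h1 : Tendsto (fun n => a n * ‖w n‖) atTop (nhds (0 * ‖u‖)) :=
      ha0.mul hwlim.norm
    have h2 : Tendsto (fun n => ‖bu‖ * C * ‖w n - u‖) atTop (nhds (‖bu‖ * C * 0)) :=
      hwconv.const_mul _
    simpa using h1.add h2
  have hfinal : ⟪lamStar, lamStar⟫_ℝ ≤ 0 :=
    le_of_tendsto_of_tendsto' (hweak lamStar) hrhs key
  exact real_inner_self_nonpos.mp hfinal
end
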